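/- arXiv:2508.00666 — 4 statements merged into one kernel-verified Lean document; each statement's English description precedes it below -/
import Mathlib

section
/- Let a < b be real numbers, let ψ : (a,b) → [-∞,+∞) be upper semicontinuous, let Ω = {x+iy ∈ ℂ : a < y < b, x > ψ(y)}, and let h be a Koenigs map onto Ω. Then for every λ ∈ ℂ with λ ≠ 0 one has D(e^{λh}) < ∞ if and only if Re λ < 0 and ∫_a^b e^{2 Re λ · ψ(y)} dy < ∞. (Theorem 1.1(a): via Proposition 3.1 this characterizes the nonzero eigenvalues of the generator on the Dirichlet space for a hyperbolic semigroup with defining function ψ.) -/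
/-!
A holomorphic change of variables turns `D(e^{λh})` into `|λ|² ∫_Ω e^{2 Re(λw)} dA(w)`. On the
strip `a < Im w < b` the factor `e^{-2 Im λ · Im w}` is bounded above and below, so `D(e^{λh})`
is finite iff `∫_Ω e^{k Re w} dA(w)` is, with `k = 2 Re λ`. By Tonelli this is the integral over
`y ∈ (a, b)` of `∫_{ψ(y)}^∞ e^{kx} dx`, which is `+∞` when `k ≥ 0` and `e^{kψ(y)}/(-k)` when
`k < 0`.
-/

open MeasureTheory Set Complex Metric
open scoped ENNReal NNReal

noncomputable section

/-- The Dirichlet integral `D(f) = ∫_𝔻 |f'(z)|² dA(z)` over the unit disk. -/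
def dirichletIntegral (f : ℂ → ℂ) : ℝ≥0∞ :=
  ∫⁻ z in ball (0 : ℂ) 1, (‖deriv f z‖₊ : ℝ≥0∞) ^ 2

/-- `h` is a Koenigs map onto `Ω`: an injective holomorphic map on the unit disk with image `Ω`. -/
def IsKoenigsMap (h : ℂ → ℂ) (Ω : Set ℂ) : Prop :=
  DifferentiableOn ℂ h (ball 0 1) ∧ InjOn h (ball 0 1) ∧ h '' ball 0 1 = Ω

lemma ENNReal.mul_lt_top_iff_right {a b : ℝ≥0∞} (ha₀ : a ≠ 0) (ha : a ≠ ⊤) :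
    a * b < ⊤ ↔ b < ⊤ := by
  simp [lt_top_iff_ne_top, ENNReal.mul_eq_top, ha₀, ha]

lemma ENNReal.ofReal_normSq (c : ℂ) : ENNReal.ofReal (normSq c) = ‖c‖ₑ ^ 2 := by
  rw [normSq_eq_norm_sq, ENNReal.ofReal_pow (norm_nonneg _), ofReal_norm]

lemma Complex.det_restrictScalars_toSpanSingleton (c : ℂ) :
    ((ContinuousLinearMap.toSpanSingleton ℂ c).restrictScalars ℝ).det = normSq c := by
  rw [ContinuousLinearMap.det, ContinuousLinearMap.coe_restrictScalars,
    LinearMap.det_restrictScalars]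
  simp [Algebra.norm_complex_apply]

lemma Complex.enorm_deriv_exp_const_mul_sq (lam w : ℂ) :
    ‖deriv (fun w => cexp (lam * w)) w‖ₑ ^ 2 =
      ‖lam‖ₑ ^ 2 * ENNReal.ofReal (Real.exp (2 * (lam * w).re)) := by
  rw [((hasDerivAt_id' w).const_mul lam).cexp.deriv, mul_one, enorm_mul, mul_pow, mul_comm,
    ← ofReal_norm (cexp _), norm_exp, ← ENNReal.ofReal_pow (Real.exp_nonneg _),
    ← Real.exp_nat_mul]
  norm_num

namespace IsKoenigsMap

variable {h : ℂ → ℂ} {Ω : Set ℂ}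

lemma hasFDerivWithinAt (hK : IsKoenigsMap h Ω) {z : ℂ} (hz : z ∈ ball 0 1) :
    HasFDerivWithinAt h ((ContinuousLinearMap.toSpanSingleton ℂ (deriv h z)).restrictScalars ℝ)
      (ball 0 1) z :=
  ((hK.1.differentiableAt (isOpen_ball.mem_nhds hz)).hasDerivAt.hasFDerivAt.restrictScalars
    ℝ).hasFDerivWithinAt

lemma measurableSet (hK : IsKoenigsMap h Ω) : MeasurableSet Ω :=
  hK.2.2 ▸ measurable_image_of_fderivWithin measurableSet_ball (fun _ => hK.hasFDerivWithinAt)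
    hK.2.1

lemma dirichletIntegral_comp (hK : IsKoenigsMap h Ω) {g : ℂ → ℂ}
    (hg : ∀ w ∈ Ω, DifferentiableAt ℂ g w) :
    dirichletIntegral (g ∘ h) = ∫⁻ w in Ω, ‖deriv g w‖ₑ ^ 2 := by
  rw [← hK.2.2, lintegral_image_eq_lintegral_abs_det_fderiv_mul volume measurableSet_ball
    (fun _ => hK.hasFDerivWithinAt) hK.2.1]
  refine setLIntegral_congr_fun measurableSet_ball fun z hz => ?_
  have hhz : DifferentiableAt ℂ h z := hK.1.differentiableAt (isOpen_ball.mem_nhds hz)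
  rw [deriv_comp z (hg _ (hK.2.2 ▸ mem_image_of_mem h hz)) hhz,
    det_restrictScalars_toSpanSingleton, abs_of_nonneg (normSq_nonneg _),
    ENNReal.ofReal_normSq, ← enorm_eq_nnnorm, enorm_mul, mul_pow, mul_comm]

end IsKoenigsMap

lemma setLIntegral_ofReal_exp_lt_top_of_sub_le {α : Type*} [MeasurableSpace α] {μ : Measure α}
    {s : Set α} (hs : MeasurableSet s) {u v : α → ℝ} {T : ℝ} (huv : ∀ x ∈ s, u x - v x ≤ T)
    (hv : ∫⁻ x in s, ENNReal.ofReal (Real.exp (v x)) ∂μ < ⊤) :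
    ∫⁻ x in s, ENNReal.ofReal (Real.exp (u x)) ∂μ < ⊤ :=
  calc ∫⁻ x in s, ENNReal.ofReal (Real.exp (u x)) ∂μ
      ≤ ∫⁻ x in s, ENNReal.ofReal (Real.exp T) * ENNReal.ofReal (Real.exp (v x)) ∂μ := by
        refine setLIntegral_mono' hs fun x hx => ?_
        rw [← ENNReal.ofReal_mul (Real.exp_nonneg _), ← Real.exp_add]
        exact ENNReal.ofReal_le_ofReal (Real.exp_le_exp.2 (by linarith [huv x hx]))
    _ < ⊤ := by
        rw [lintegral_const_mul' _ _ ENNReal.ofReal_ne_top]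
        exact ENNReal.mul_lt_top ENNReal.ofReal_lt_top hv

lemma setLIntegral_ofReal_exp_lt_top_iff {α : Type*} [MeasurableSpace α] {μ : Measure α}
    {s : Set α} (hs : MeasurableSet s) {u v : α → ℝ} {T : ℝ} (huv : ∀ x ∈ s, |u x - v x| ≤ T) :
    ∫⁻ x in s, ENNReal.ofReal (Real.exp (u x)) ∂μ < ⊤ ↔
      ∫⁻ x in s, ENNReal.ofReal (Real.exp (v x)) ∂μ < ⊤ :=
  ⟨setLIntegral_ofReal_exp_lt_top_of_sub_le hs fun x hx => by
      linarith [(abs_le.1 (huv x hx)).1],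
    setLIntegral_ofReal_exp_lt_top_of_sub_le hs fun x hx => by
      linarith [(abs_le.1 (huv x hx)).2]⟩

lemma lintegral_ofReal_exp_mul_Ioi_of_neg {k : ℝ} (hk : k < 0) (r : ℝ) :
    ∫⁻ x in Ioi r, ENNReal.ofReal (Real.exp (k * x)) =
      ENNReal.ofReal (-k)⁻¹ * ENNReal.ofReal (Real.exp (k * r)) := by
  rw [← ofReal_integral_eq_lintegral_ofReal (integrableOn_exp_mul_Ioi hk r)
    (Filter.Eventually.of_forall fun _ => Real.exp_nonneg _), integral_exp_mul_Ioi hk r,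
    ← ENNReal.ofReal_mul (inv_nonneg.2 (neg_nonneg.2 hk.le))]
  congr 1
  field_simp

lemma lintegral_ofReal_exp_mul_Ioi_of_nonneg {k : ℝ} (hk : 0 ≤ k) (r : ℝ) :
    ∫⁻ x in Ioi r, ENNReal.ofReal (Real.exp (k * x)) = ⊤ := by
  refine eq_top_iff.2 (le_trans ?_ (setLIntegral_mono (by fun_prop) fun x (hx : r < x) =>
    ENNReal.ofReal_le_ofReal (Real.exp_le_exp.2 (mul_le_mul_of_nonneg_left hx.le hk))))
  rw [setLIntegral_const, Real.volume_Ioi, ENNReal.mul_top (by positivity)]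

lemma lintegral_ofReal_exp_mul (k : ℝ) : ∫⁻ x, ENNReal.ofReal (Real.exp (k * x)) = ⊤ := by
  rcases le_total 0 k with hk | hk
  · exact eq_top_iff.2 ((lintegral_ofReal_exp_mul_Ioi_of_nonneg hk 0).ge.trans
      (setLIntegral_le_lintegral _ _))
  · rw [← lintegral_neg_eq_self, eq_top_iff,
      ← lintegral_ofReal_exp_mul_Ioi_of_nonneg (neg_nonneg.2 hk) 0]
    simpa only [neg_mul_comm] using setLIntegral_le_lintegral _ _

lemma measurableSet_ereal_lt (c : EReal) : MeasurableSet {x : ℝ | c < (x : EReal)} :=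
  measurableSet_Ioi.preimage measurable_coe_real_ereal

lemma lintegral_ofReal_exp_mul_ereal_Ioi_of_neg {k : ℝ} (hk : k < 0) {c : EReal} (hc : c < ⊤) :
    ∫⁻ x in {x : ℝ | c < (x : EReal)}, ENNReal.ofReal (Real.exp (k * x)) =
      ENNReal.ofReal (-k)⁻¹ * EReal.exp (k * c) := by
  induction c using EReal.rec with
  | bot =>
    rw [EReal.coe_mul_bot_of_neg hk, EReal.exp_top, ENNReal.mul_top (by simpa using hk)]
    simpa using lintegral_ofReal_exp_mul k
  | coe r =>
    rw [← EReal.coe_mul, EReal.exp_coe, ← lintegral_ofReal_exp_mul_Ioi_of_neg hk r]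
    simp only [EReal.coe_lt_coe_iff]
    rfl
  | top => exact absurd hc (lt_irrefl _)

lemma lintegral_ofReal_exp_mul_ereal_Ioi_of_nonneg {k : ℝ} (hk : 0 ≤ k) {c : EReal}
    (hc : c < ⊤) : ∫⁻ x in {x : ℝ | c < (x : EReal)}, ENNReal.ofReal (Real.exp (k * x)) = ⊤ := by
  obtain ⟨r, hcr, -⟩ := EReal.lt_iff_exists_real_btwn.1 hc
  exact eq_top_iff.2 ((lintegral_ofReal_exp_mul_Ioi_of_nonneg hk r).ge.trans
    (lintegral_mono_set fun x (hx : r < x) => hcr.trans (EReal.coe_lt_coe_iff.2 hx)))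

def regionRightOfGraph (s : Set ℝ) (φ : ℝ → EReal) : Set ℂ :=
  {w | w.im ∈ s ∧ φ w.im < (w.re : EReal)}

section regionRightOfGraph

variable {s : Set ℝ} {φ : ℝ → EReal}

lemma lintegral_regionRightOfGraph (hs : MeasurableSet s)
    (hm : MeasurableSet (regionRightOfGraph s φ)) {g : ℝ → ℝ≥0∞} (hg : Measurable g) :
    ∫⁻ w in regionRightOfGraph s φ, g w.re =
      ∫⁻ y in s, ∫⁻ x in {x : ℝ | φ y < (x : EReal)}, g x := by
  have hslice : ∀ x y, (regionRightOfGraph s φ).indicator (fun w => g w.re)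
      (measurableEquivRealProd.symm (x, y)) =
        s.indicator (fun y => {x : ℝ | φ y < (x : EReal)}.indicator g x) y := by
    intro x y
    by_cases hy : y ∈ s <;>
      simp [indicator, regionRightOfGraph, measurableEquivRealProd_symm_apply, hy]
  rw [← lintegral_indicator hm, ← volume_preserving_equiv_real_prod.symm.lintegral_comp_emb
      measurableEquivRealProd.symm.measurableEmbedding, Measure.volume_eq_prod,
    lintegral_prod_symm _ ?_, ← lintegral_indicator hs]
  · refine lintegral_congr fun y => ?_
    simp only [hslice]
    by_cases hy : y ∈ s
    · simp only [indicator_of_mem hy, lintegral_indicator (measurableSet_ereal_lt _)]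
    · simp only [indicator_of_notMem hy, lintegral_zero]
  · exact (((hg.comp measurable_re).indicator hm).comp
      measurableEquivRealProd.symm.measurable).aemeasurable

lemma lintegral_regionRightOfGraph_exp_of_neg (hs : MeasurableSet s)
    (hm : MeasurableSet (regionRightOfGraph s φ)) (hφ : ∀ y ∈ s, φ y < ⊤) {k : ℝ} (hk : k < 0) :
    ∫⁻ w in regionRightOfGraph s φ, ENNReal.ofReal (Real.exp (k * w.re)) =
      ENNReal.ofReal (-k)⁻¹ * ∫⁻ y in s, EReal.exp (k * φ y) := by
  rw [lintegral_regionRightOfGraph hs hm (g := fun x => ENNReal.ofReal (Real.exp (k * x)))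
    (by fun_prop), ← lintegral_const_mul' _ _ ENNReal.ofReal_ne_top]
  exact setLIntegral_congr_fun hs fun y hy =>
    lintegral_ofReal_exp_mul_ereal_Ioi_of_neg hk (hφ y hy)

lemma lintegral_regionRightOfGraph_exp_of_nonneg (hs : MeasurableSet s) (hs₀ : volume s ≠ 0)
    (hm : MeasurableSet (regionRightOfGraph s φ)) (hφ : ∀ y ∈ s, φ y < ⊤) {k : ℝ} (hk : 0 ≤ k) :
    ∫⁻ w in regionRightOfGraph s φ, ENNReal.ofReal (Real.exp (k * w.re)) = ⊤ := by
  rw [lintegral_regionRightOfGraph hs hm (g := fun x => ENNReal.ofReal (Real.exp (k * x)))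
    (by fun_prop), setLIntegral_congr_fun hs fun y hy =>
      lintegral_ofReal_exp_mul_ereal_Ioi_of_nonneg hk (hφ y hy),
    setLIntegral_const, ENNReal.top_mul hs₀]

end regionRightOfGraph

theorem dirichlet_spectrum_hyperbolic_defining_function_general
    (a b : ℝ) (hab : a < b) (ψ : ℝ → EReal)
    (hψ_lt_top : ∀ y ∈ Ioo a b, ψ y < ⊤)
    (Ω : Set ℂ)
    (hΩ : Ω = {w : ℂ | w.im ∈ Ioo a b ∧ ψ w.im < (w.re : EReal)})
    (h : ℂ → ℂ) (hKoenigs : IsKoenigsMap h Ω)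
    (lam : ℂ) (hlam : lam ≠ 0) :
    dirichletIntegral (fun z => Complex.exp (lam * h z)) < ⊤ ↔
      (lam.re < 0 ∧
        ∫⁻ y in Ioo a b, EReal.exp (((2 * lam.re : ℝ) : EReal) * ψ y) < ⊤) := by
  replace hΩ : Ω = regionRightOfGraph (Ioo a b) ψ := hΩ
  have hm : MeasurableSet Ω := hKoenigs.measurableSet
  have hstrip : ∀ w ∈ Ω,
      |2 * (lam * w).re - 2 * lam.re * w.re| ≤ 2 * |lam.im| * max |a| |b| := fun w hw => by
    have hw := (hΩ ▸ hw).1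
    calc |2 * (lam * w).re - 2 * lam.re * w.re| = 2 * |lam.im| * |w.im| := by
          rw [mul_re, ← abs_two, ← abs_mul, ← abs_mul, ← abs_neg]
          ring_nf
      _ ≤ _ := by gcongr; exact abs_le_max_abs_abs hw.1.le hw.2.le
  rw [show (fun z => cexp (lam * h z)) = (fun w => cexp (lam * w)) ∘ h from rfl,
    hKoenigs.dirichletIntegral_comp fun w _ => by fun_prop]
  simp only [enorm_deriv_exp_const_mul_sq]
  rw [lintegral_const_mul' _ _ (by simp),
    ENNReal.mul_lt_top_iff_right (by simpa using hlam) (by simp),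
    setLIntegral_ofReal_exp_lt_top_iff hm hstrip]
  subst hΩ
  rcases lt_or_ge lam.re 0 with hneg | hnonneg
  · rw [lintegral_regionRightOfGraph_exp_of_neg measurableSet_Ioo hm hψ_lt_top (by linarith),
      ENNReal.mul_lt_top_iff_right (by simpa using hneg) ENNReal.ofReal_ne_top]
    simp [hneg]
  · rw [lintegral_regionRightOfGraph_exp_of_nonneg measurableSet_Ioo (by simpa using hab) hm
      hψ_lt_top (by linarith)]
    simp [hnonneg.not_gt]

/-- **Theorem 1.1(a).** For the Koenigs domain `Ω = {x+iy : a < y < b, x > ψ(y)}` of a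
hyperbolic semigroup, a nonzero `λ` is an eigenvalue of the generator on the Dirichlet space
(i.e. `D(e^{λh}) < ∞`) iff `Re λ < 0` and `∫_a^b e^{2 Re λ · ψ(y)} dy < ∞`. -/
theorem dirichlet_spectrum_hyperbolic_defining_function
    (a b : ℝ) (hab : a < b) (ψ : ℝ → EReal)
    (hψ_usc : UpperSemicontinuousOn ψ (Ioo a b))
    (hψ_lt_top : ∀ y ∈ Ioo a b, ψ y < ⊤)
    (Ω : Set ℂ)
    (hΩ : Ω = {w : ℂ | w.im ∈ Ioo a b ∧ ψ w.im < (w.re : EReal)})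
    (h : ℂ → ℂ) (hKoenigs : IsKoenigsMap h Ω)
    (lam : ℂ) (hlam : lam ≠ 0) :
    dirichletIntegral (fun z => Complex.exp (lam * h z)) < ⊤ ↔
      (lam.re < 0 ∧
        ∫⁻ y in Ioo a b, EReal.exp (((2 * lam.re : ℝ) : EReal) * ψ y) < ⊤) :=
  dirichlet_spectrum_hyperbolic_defining_function_general a b hab ψ hψ_lt_top Ω hΩ h hKoenigs lam
    hlam
end
end

section
/- Let Ω be a domain in ℂ that is convex in the positive direction and contained in a horizontal strip, and let h be a Koenigs map onto Ω. Suppose W(Ω) = ∫_{-∞}^0 ℓ_Ω(x) dx < ∞, that ℓ_Ω(x) > 0 for all x ≤ 0, that log ℓ_Ω(x)/(2x) → δ ∈ (0,+∞) as x → -∞, and that ∫_{-∞}^0 e^{-2δx} ℓ_Ω(x) dx = +∞. Then for every λ ∈ ℂ with λ ≠ 0 one has D(e^{λh}) < ∞ if and only if -δ < Re λ < 0; that is, the point spectrum on the Dirichlet space equals {-δ < Re λ < 0} ∪ {0}. (Theorem 1.2(d).) -/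
open MeasureTheory Set Complex Metric
open scoped ENNReal NNReal

noncomputable section

/-- `Ω` is convex in the positive direction: `Ω + t ⊆ Ω` for all `t ≥ 0`. -/
def ConvexPosDir (Ω : Set ℂ) : Prop :=
  ∀ t : ℝ, 0 ≤ t → ∀ w ∈ Ω, w + (t : ℂ) ∈ Ω

/-- `ℓ_Ω(x)`: one-dimensional Lebesgue measure of the vertical slice `{y : x + iy ∈ Ω}`. -/
def sliceLen (Ω : Set ℂ) (x : ℝ) : ℝ≥0∞ :=
  volume {y : ℝ | (x : ℂ) + (y : ℂ) * Complex.I ∈ Ω}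

/-! Changing variables through `h` gives `D(e^{λh}) = |λ|² ∫_Ω e^{2 Re(λw)} dA(w)`. Integrating
over vertical slices, and using that on a horizontal strip the factor `e^{-2 Im λ · y}` is bounded
above and below, this is finite iff `∫ e^{2 Re λ · x} ℓ_Ω(x) dx` is. For `Re λ ≥ 0` that integral
diverges on `[0, ∞)`, where `ℓ_Ω` is nondecreasing and positive; for `Re λ ≤ -δ` it dominates the
divergent `∫_{-∞}^0 e^{-2δx} ℓ_Ω(x) dx`. For `-δ < Re λ < 0` the growth condition gives
`ℓ_Ω(x) ≤ e^{(δ - Re λ)x}` near `-∞`, and elsewhere `ℓ_Ω` is bounded by the width of the strip. -/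

open Filter Topology

theorem lintegral_image_eq_lintegral_nnnorm_deriv_sq_mul {f : ℂ → ℂ} {U : Set ℂ} (hU : IsOpen U)
    (hf : DifferentiableOn ℂ f U) (hinj : InjOn f U) (g : ℂ → ℝ≥0∞) :
    ∫⁻ w in f '' U, g w = ∫⁻ z in U, (‖deriv f z‖₊ : ℝ≥0∞) ^ 2 * g (f z) := by
  have hf' : ∀ z ∈ U, HasFDerivWithinAt f
      (((1 : ℂ →L[ℂ] ℂ).smulRight (deriv f z)).restrictScalars ℝ) U z := fun z hz =>
    ((hf.differentiableAt (hU.mem_nhds hz)).hasDerivAt.hasFDerivAt.restrictScalars ℝ)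
      |>.hasFDerivWithinAt
  rw [lintegral_image_eq_lintegral_abs_det_fderiv_mul volume hU.measurableSet hf' hinj g]
  refine setLIntegral_congr_fun hU.measurableSet fun z _ => ?_
  simp [ContinuousLinearMap.det, LinearMap.det_restrictScalars, Algebra.norm_complex_eq,
    Complex.normSq_eq_norm_sq, enorm_eq_nnnorm]

theorem dirichletIntegral_exp_mul_eq {h : ℂ → ℂ} {Ω : Set ℂ} (hh : IsKoenigsMap h Ω) (lam : ℂ) :
    dirichletIntegral (fun z => exp (lam * h z)) =
      ENNReal.ofReal (normSq lam) * ∫⁻ w in Ω, ENNReal.ofReal (Real.exp (2 * (lam * w).re)) := by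
  obtain ⟨hd, hinj, rfl⟩ := hh
  have nnnorm_sq : ∀ c : ℂ, (‖c‖₊ : ℝ≥0∞) ^ 2 = ENNReal.ofReal (normSq c) := fun c => by
    rw [normSq_eq_norm_sq, ENNReal.ofReal_pow (norm_nonneg _), ofReal_norm]; rfl
  rw [lintegral_image_eq_lintegral_nnnorm_deriv_sq_mul isOpen_ball hd hinj, dirichletIntegral,
    ← lintegral_const_mul' _ _ ENNReal.ofReal_ne_top]
  refine setLIntegral_congr_fun measurableSet_ball fun z hz => ?_
  rw [((hd.differentiableAt (isOpen_ball.mem_nhds hz)).hasDerivAt.const_mul lam).cexp.deriv,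
    nnnorm_sq, nnnorm_sq, ← ENNReal.ofReal_mul (normSq_nonneg _),
    ← ENNReal.ofReal_mul (normSq_nonneg _)]
  congr 1
  rw [normSq_mul, normSq_mul, normSq_eq_norm_sq (exp _), norm_exp, ← Real.exp_nat_mul]
  push_cast
  ring

theorem measurableSet_setOf_add_mul_I_mem {Ω : Set ℂ} (hΩ : MeasurableSet Ω) (x : ℝ) :
    MeasurableSet {y : ℝ | (x : ℂ) + y * I ∈ Ω} :=
  (by fun_prop : Continuous fun y : ℝ => (x : ℂ) + y * I).measurable hΩ

theorem setLIntegral_eq_lintegral_setLIntegral_slice {Ω : Set ℂ} (hΩ : MeasurableSet Ω)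
    {f : ℂ → ℝ≥0∞} (hf : Measurable f) :
    ∫⁻ w in Ω, f w = ∫⁻ x : ℝ, ∫⁻ y in {y : ℝ | (x : ℂ) + y * I ∈ Ω}, f (x + y * I) := by
  rw [← lintegral_indicator hΩ, ← (volume_preserving_equiv_real_prod.symm
    measurableEquivRealProd).lintegral_comp (hf.indicator hΩ), Measure.volume_eq_prod,
    lintegral_prod (fun p => Ω.indicator f (measurableEquivRealProd.symm p))
      ((hf.indicator hΩ).comp measurableEquivRealProd.symm.measurable).aemeasurable]
  refine lintegral_congr fun x => ?_
  rw [← lintegral_indicator (measurableSet_setOf_add_mul_I_mem hΩ x)]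
  refine lintegral_congr fun y => ?_
  rw [show measurableEquivRealProd.symm (x, y) = x + y * I from mk_eq_add_mul_I x y]
  rfl

theorem setOf_add_mul_I_mem_subset_Ioo {Ω : Set ℂ} {a b : ℝ}
    (hstrip : Ω ⊆ {w | a < w.im ∧ w.im < b}) (x : ℝ) :
    {y : ℝ | (x : ℂ) + y * I ∈ Ω} ⊆ Ioo a b := fun y hy => by
  simpa using hstrip hy

theorem sliceLen_le_of_subset_strip {Ω : Set ℂ} {a b : ℝ}
    (hstrip : Ω ⊆ {w | a < w.im ∧ w.im < b}) (x : ℝ) : sliceLen Ω x ≤ ENNReal.ofReal (b - a) :=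
  Real.volume_Ioo ▸ measure_mono (setOf_add_mul_I_mem_subset_Ioo hstrip x)

theorem ConvexPosDir.monotone_sliceLen {Ω : Set ℂ} (hΩ : ConvexPosDir Ω) :
    Monotone (sliceLen Ω) := fun x x' hxx' => measure_mono fun y hy => by
  have := hΩ (x' - x) (sub_nonneg.mpr hxx') _ hy
  show (x' : ℂ) + y * I ∈ Ω
  convert this using 1
  push_cast
  ring

theorem setLIntegral_exp_mul_bounds {S : Set ℝ} (hS : MeasurableSet S) {a b : ℝ}
    (hSab : S ⊆ Ioo a b) (c : ℝ) :
    ENNReal.ofReal (Real.exp (-(|c| * (|a| + |b|)))) * volume S ≤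
        ∫⁻ y in S, ENNReal.ofReal (Real.exp (c * y)) ∧
      ∫⁻ y in S, ENNReal.ofReal (Real.exp (c * y)) ≤
        ENNReal.ofReal (Real.exp (|c| * (|a| + |b|))) * volume S := by
  have hbound : ∀ y ∈ S, |c * y| ≤ |c| * (|a| + |b|) := fun y hy => by
    obtain ⟨hay, hyb⟩ := hSab hy
    rw [abs_mul]
    refine mul_le_mul_of_nonneg_left (abs_le.mpr ⟨?_, ?_⟩) (abs_nonneg c) <;>
      linarith [neg_abs_le a, le_abs_self b, abs_nonneg a, abs_nonneg b]
  rw [← setLIntegral_const, ← setLIntegral_const]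
  exact ⟨setLIntegral_mono' hS fun y hy => ENNReal.ofReal_le_ofReal <|
      Real.exp_le_exp.mpr (neg_le_of_abs_le (hbound y hy)),
    setLIntegral_mono' hS fun y hy => ENNReal.ofReal_le_ofReal <|
      Real.exp_le_exp.mpr (le_of_abs_le (hbound y hy))⟩

theorem lintegral_lt_top_iff_of_le_of_le {α : Type*} [MeasurableSpace α] {μ : Measure α}
    {f g : α → ℝ≥0∞} {c C : ℝ≥0∞} (hc : c ≠ 0) (hC : C ≠ ⊤)
    (hcf : ∀ x, c * f x ≤ g x) (hgC : ∀ x, g x ≤ C * f x) :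
    ∫⁻ x, g x ∂μ < ⊤ ↔ ∫⁻ x, f x ∂μ < ⊤ := by
  refine ⟨fun hg => ENNReal.lt_top_of_mul_ne_top_right ?_ hc, fun hf => ?_⟩
  · exact (((lintegral_const_mul_le c f).trans (lintegral_mono hcf)).trans_lt hg).ne
  · calc ∫⁻ x, g x ∂μ ≤ ∫⁻ x, C * f x ∂μ := lintegral_mono hgC
      _ = C * ∫⁻ x, f x ∂μ := lintegral_const_mul' C f hC
      _ < ⊤ := ENNReal.mul_lt_top hC.lt_top hf

theorem setLIntegral_exp_re_mul_lt_top_iff {Ω : Set ℂ} (hΩ : MeasurableSet Ω) {a b : ℝ}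
    (hstrip : Ω ⊆ {w | a < w.im ∧ w.im < b}) (lam : ℂ) :
    ∫⁻ w in Ω, ENNReal.ofReal (Real.exp (2 * (lam * w).re)) < ⊤ ↔
      ∫⁻ x, ENNReal.ofReal (Real.exp (2 * lam.re * x)) * sliceLen Ω x < ⊤ := by
  have hsplit (x y : ℝ) : ENNReal.ofReal (Real.exp (2 * (lam * (x + y * I)).re)) =
      ENNReal.ofReal (Real.exp (2 * lam.re * x)) *
        ENNReal.ofReal (Real.exp (-2 * lam.im * y)) := by
    rw [← ENNReal.ofReal_mul (Real.exp_pos _).le, ← Real.exp_add]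
    congr 2
    simp only [mul_re, add_re, add_im, ofReal_re, ofReal_im, mul_im, I_re, I_im]
    ring
  rw [setLIntegral_eq_lintegral_setLIntegral_slice hΩ (by fun_prop)]
  simp only [hsplit, lintegral_const_mul' _ _ ENNReal.ofReal_ne_top]
  have hbounds (x : ℝ) := setLIntegral_exp_mul_bounds (measurableSet_setOf_add_mul_I_mem hΩ x)
    (setOf_add_mul_I_mem_subset_Ioo hstrip x) (-2 * lam.im)
  set K := |(-2 * lam.im)| * (|a| + |b|)
  refine lintegral_lt_top_iff_of_le_of_le (c := ENNReal.ofReal (Real.exp (-K)))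
    (C := ENNReal.ofReal (Real.exp K)) (by positivity) ENNReal.ofReal_ne_top
    (fun x => ?_) (fun x => ?_) <;> rw [mul_left_comm] <;> gcongr
  exacts [(hbounds x).1, (hbounds x).2]

section ExpWeighted

variable {ℓ : ℝ → ℝ≥0∞} {s δ : ℝ}

theorem lintegral_exp_mul_mul_eq_top_of_nonneg (hℓ : Monotone ℓ) (h0 : ℓ 0 ≠ 0) (hs : 0 ≤ s) :
    ∫⁻ x, ENNReal.ofReal (Real.exp (2 * s * x)) * ℓ x = ⊤ := by
  refine top_le_iff.mp ?_
  calc ⊤ = ∫⁻ _ in Ici (0 : ℝ), ℓ 0 := by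
        rw [setLIntegral_const, Real.volume_Ici, ENNReal.mul_top h0]
    _ ≤ ∫⁻ x in Ici (0 : ℝ), ENNReal.ofReal (Real.exp (2 * s * x)) * ℓ x :=
        setLIntegral_mono' measurableSet_Ici fun x (hx : 0 ≤ x) =>
          le_mul_of_one_le_of_le (ENNReal.one_le_ofReal.mpr (Real.one_le_exp (by positivity)))
            (hℓ hx)
    _ ≤ _ := setLIntegral_le_lintegral _ _

theorem lintegral_exp_mul_mul_eq_top_of_le
    (hint : ∫⁻ x in Iio (0 : ℝ), ENNReal.ofReal (Real.exp (-2 * δ * x)) * ℓ x = ⊤)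
    (hs : s ≤ -δ) :
    ∫⁻ x, ENNReal.ofReal (Real.exp (2 * s * x)) * ℓ x = ⊤ := by
  refine top_le_iff.mp (hint ▸ ?_)
  calc _ ≤ ∫⁻ x in Iio (0 : ℝ), ENNReal.ofReal (Real.exp (2 * s * x)) * ℓ x :=
        setLIntegral_mono' measurableSet_Iio fun x (hx : x < 0) => by
          gcongr ENNReal.ofReal (Real.exp ?_) * _; nlinarith
    _ ≤ _ := setLIntegral_le_lintegral _ _

theorem eventually_le_ofReal_exp_of_tendsto_log_div {t : ℝ} (hfin : ∀ x, ℓ x ≠ ⊤)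
    (hlim : Tendsto (fun x => Real.log (ℓ x).toReal / (2 * x)) atBot (𝓝 δ)) (ht : t < δ) :
    ∀ᶠ x in atBot, ℓ x ≤ ENNReal.ofReal (Real.exp (2 * t * x)) := by
  filter_upwards [hlim.eventually (lt_mem_nhds ht), eventually_lt_atBot 0] with x hx hx0
  rw [← ENNReal.ofReal_toReal (hfin x)]
  refine ENNReal.ofReal_le_ofReal ((Real.le_exp_log _).trans (Real.exp_le_exp.mpr ?_))
  have := (lt_div_iff_of_neg (by linarith)).mp hx
  linarith

theorem lintegral_exp_mul_mul_lt_top {C : ℝ≥0∞} (hC : C ≠ ⊤) (hℓC : ∀ x, ℓ x ≤ C)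
    (hlim : Tendsto (fun x => Real.log (ℓ x).toReal / (2 * x)) atBot (𝓝 δ))
    (hδs : -δ < s) (hs : s < 0) :
    ∫⁻ x, ENNReal.ofReal (Real.exp (2 * s * x)) * ℓ x < ⊤ := by
  obtain ⟨X, hX⟩ := eventually_atBot.mp <| eventually_le_ofReal_exp_of_tendsto_log_div
    (fun x => ne_top_of_le_ne_top hC (hℓC x)) hlim (t := (δ - s) / 2) (by linarith)
  rw [← lintegral_add_compl _ (measurableSet_Iic (a := X)), compl_Iic]
  refine ENNReal.add_lt_top.mpr ⟨?_, ?_⟩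
  · calc _ ≤ ∫⁻ x in Iic X, ENNReal.ofReal (Real.exp ((δ + s) * x)) :=
          setLIntegral_mono' measurableSet_Iic fun x (hx : x ≤ X) => by
            grw [hX x hx, ← ENNReal.ofReal_mul (Real.exp_pos _).le, ← Real.exp_add]
            rw [show 2 * s * x + 2 * ((δ - s) / 2) * x = (δ + s) * x by ring]
      _ < ⊤ := (integrableOn_exp_mul_Iic (by linarith) X).lintegral_lt_top
  · calc _ ≤ ∫⁻ x in Ioi X, C * ENNReal.ofReal (Real.exp (2 * s * x)) :=
          lintegral_mono fun x => by rw [mul_comm]; gcongr; exact hℓC x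
      _ = C * ∫⁻ x in Ioi X, ENNReal.ofReal (Real.exp (2 * s * x)) :=
          lintegral_const_mul' _ _ hC
      _ < ⊤ := ENNReal.mul_lt_top hC.lt_top
          (integrableOn_exp_mul_Ioi (by linarith) X).lintegral_lt_top

end ExpWeighted

theorem dirichlet_spectrum_hyperbolic_delta_finite_open_general
    (Ω : Set ℂ) (hopen : IsOpen Ω)
    (hconv : ConvexPosDir Ω)
    (hstrip : ∃ a b : ℝ, Ω ⊆ {w : ℂ | a < w.im ∧ w.im < b})
    (h : ℂ → ℂ) (hKoenigs : IsKoenigsMap h Ω)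
    (hpos : ∀ x : ℝ, x ≤ 0 → 0 < sliceLen Ω x)
    (δ : ℝ)
    (hlim : Filter.Tendsto (fun x : ℝ => Real.log (sliceLen Ω x).toReal / (2 * x))
      Filter.atBot (nhds δ))
    (hint : ∫⁻ x in Iio (0 : ℝ),
      ENNReal.ofReal (Real.exp (-2 * δ * x)) * sliceLen Ω x = ⊤)
    (lam : ℂ) (hlam : lam ≠ 0) :
    dirichletIntegral (fun z => Complex.exp (lam * h z)) < ⊤ ↔
      (-δ < lam.re ∧ lam.re < 0) := by
  obtain ⟨a, b, hab⟩ := hstrip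
  have hscale (J : ℝ≥0∞) : ENNReal.ofReal (normSq lam) * J < ⊤ ↔ J < ⊤ := by
    simp [lt_top_iff_ne_top, ENNReal.mul_eq_top, hlam]
  rw [dirichletIntegral_exp_mul_eq hKoenigs, hscale,
    setLIntegral_exp_re_mul_lt_top_iff hopen.measurableSet hab lam]
  refine ⟨fun hfin => ⟨?_, ?_⟩, fun ⟨hδ, hneg⟩ => ?_⟩
  · by_contra! hle
    exact hfin.ne (lintegral_exp_mul_mul_eq_top_of_le hint hle)
  · by_contra! hnonneg
    exact hfin.ne (lintegral_exp_mul_mul_eq_top_of_nonneg hconv.monotone_sliceLen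
      (hpos 0 le_rfl).ne' hnonneg)
  · exact lintegral_exp_mul_mul_lt_top ENNReal.ofReal_ne_top (sliceLen_le_of_subset_strip hab)
      hlim hδ hneg

/-- **Theorem 1.2(d).** If `W(Ω) < ∞`, `ℓ_Ω(x) > 0` for `x ≤ 0`,
`log ℓ_Ω(x)/(2x) → δ ∈ (0,∞)` as `x → -∞`, and `∫_{-∞}^0 e^{-2δx} ℓ_Ω(x) dx = +∞`, then the
point spectrum on the Dirichlet space is `{-δ < Re λ < 0} ∪ {0}`. -/
theorem dirichlet_spectrum_hyperbolic_delta_finite_open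
    (Ω : Set ℂ) (hopen : IsOpen Ω) (hconn : IsConnected Ω)
    (hconv : ConvexPosDir Ω)
    (hstrip : ∃ a b : ℝ, Ω ⊆ {w : ℂ | a < w.im ∧ w.im < b})
    (h : ℂ → ℂ) (hKoenigs : IsKoenigsMap h Ω)
    (hW : ∫⁻ x in Iio (0 : ℝ), sliceLen Ω x < ⊤)
    (hpos : ∀ x : ℝ, x ≤ 0 → 0 < sliceLen Ω x)
    (δ : ℝ) (hδpos : 0 < δ)
    (hlim : Filter.Tendsto (fun x : ℝ => Real.log (sliceLen Ω x).toReal / (2 * x))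
      Filter.atBot (nhds δ))
    (hint : ∫⁻ x in Iio (0 : ℝ),
      ENNReal.ofReal (Real.exp (-2 * δ * x)) * sliceLen Ω x = ⊤)
    (lam : ℂ) (hlam : lam ≠ 0) :
    dirichletIntegral (fun z => Complex.exp (lam * h z)) < ⊤ ↔
      (-δ < lam.re ∧ lam.re < 0) :=
  dirichlet_spectrum_hyperbolic_delta_finite_open_general Ω hopen hconv hstrip h hKoenigs hpos δ
    hlim hint lam hlam
end
end

section
/- Let Ω be a simply connected domain contained in the upper half-plane {Im w > 0}, convex in the positive direction and not contained in any horizontal strip, and let h be a Koenigs map onto Ω. If Θ_Ω = 0 (and hence θ_Ω = 0), then for every λ ∈ ℂ with λ ≠ 0 one has D(e^{λh}) < ∞ if and only if Re λ < 0; that is, the point spectrum on the Dirichlet space equals the open left half-plane together with {0}. (Theorem 1.3(a).) -/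
open MeasureTheory Set Complex Metric
open scoped ENNReal NNReal

noncomputable section

/-- The open angular sector `S(α,β) = {w ≠ 0 : α < arg w < β}` (principal argument). -/
def sector (a b : ℝ) : Set ℂ :=
  {w : ℂ | w ≠ 0 ∧ a < Complex.arg w ∧ Complex.arg w < b}

/-- The inner argument `θ_Ω` of a domain contained in the upper half-plane. -/
def innerArg (Ω : Set ℂ) : ℝ :=
  sSup ({0} ∪ {θ : ℝ | θ ∈ Ioc 0 Real.pi ∧ ∃ q : ℂ, (fun w => q + w) '' sector 0 θ ⊆ Ω})

/-- The outer argument `Θ_Ω` of a domain contained in the upper half-plane. -/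
def outerArg (Ω : Set ℂ) : ℝ :=
  sInf {θ : ℝ | θ ∈ Ioc 0 Real.pi ∧ ∃ q : ℂ, Ω ⊆ (fun w => q + w) '' sector 0 θ}

/-!
The change of variables `w = h z` gives `D(e^{λh}) = |λ|² ∫_Ω |e^{λw}|² dA(w)`, so everything
depends on whether `e^{2 Re(λw)}` is integrable over `Ω`. If `Re λ ≥ 0` it is not: being open and
convex in the positive direction, `Ω` contains a horizontal half-strip, on which `Re(λw)` is bounded
below. If `Re λ < 0`, then `Θ_Ω = 0` places `Ω` in a translate of a sector `S(0,θ)` so thin that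
`2 Re(λv) ≤ (Re λ / 2)(Re v + Im v)` on it, and this bound is integrable over the quadrant.
-/

open scoped Real

lemma ContinuousLinearMap.det_restrictScalars_smulRight_one (d : ℂ) :
    ((ContinuousLinearMap.smulRight (1 : ℂ →L[ℂ] ℂ) d).restrictScalars ℝ).det = normSq d := by
  have hmul : ((ContinuousLinearMap.smulRight (1 : ℂ →L[ℂ] ℂ) d).restrictScalars ℝ : ℂ →ₗ[ℝ] ℂ)
      = Algebra.lmul ℝ ℂ d := by
    ext z
    simp [mul_comm]
  rw [ContinuousLinearMap.det, hmul, ← Algebra.norm_apply, Algebra.norm_complex_apply]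

theorem lintegral_image_eq_lintegral_enorm_deriv_sq_mul {U : Set ℂ} {h : ℂ → ℂ} (hU : IsOpen U)
    (hd : DifferentiableOn ℂ h U) (hinj : InjOn h U) (g : ℂ → ℝ≥0∞) :
    ∫⁻ w in h '' U, g w = ∫⁻ z in U, ‖deriv h z‖ₑ ^ 2 * g (h z) := by
  have hderiv : ∀ z ∈ U, HasFDerivWithinAt h
      ((ContinuousLinearMap.smulRight (1 : ℂ →L[ℂ] ℂ) (deriv h z)).restrictScalars ℝ) U z :=
    fun z hz => ((hd.differentiableAt (hU.mem_nhds hz)).hasDerivAt.hasFDerivAt.restrictScalars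
      ℝ).hasFDerivWithinAt
  rw [lintegral_image_eq_lintegral_abs_det_fderiv_mul volume hU.measurableSet hderiv hinj g]
  refine setLIntegral_congr_fun hU.measurableSet fun z _ => ?_
  rw [ContinuousLinearMap.det_restrictScalars_smulRight_one, abs_of_nonneg (normSq_nonneg _),
    ← Complex.sq_norm, ENNReal.ofReal_pow (norm_nonneg _), ofReal_norm]

theorem IsKoenigsMap.dirichletIntegral_exp_mul {h : ℂ → ℂ} {Ω : Set ℂ} (hK : IsKoenigsMap h Ω)
    (lam : ℂ) :
    dirichletIntegral (fun z => exp (lam * h z)) = ‖lam‖ₑ ^ 2 * ∫⁻ w in Ω, ‖exp (lam * w)‖ₑ ^ 2 := by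
  obtain ⟨hd, hinj, rfl⟩ := hK
  rw [lintegral_image_eq_lintegral_enorm_deriv_sq_mul isOpen_ball hd hinj, dirichletIntegral,
    ← lintegral_const_mul' _ _ (by simp)]
  refine setLIntegral_congr_fun measurableSet_ball fun z hz => ?_
  have hderiv : deriv (fun z => exp (lam * h z)) z = exp (lam * h z) * (lam * deriv h z) :=
    (((hd.differentiableAt (isOpen_ball.mem_nhds hz)).hasDerivAt.const_mul lam).cexp).deriv
  simp only [hderiv, ← enorm_eq_nnnorm, enorm_mul, mul_pow]
  ring

theorem IsKoenigsMap.dirichletIntegral_exp_mul_lt_top_iff {h : ℂ → ℂ} {Ω : Set ℂ}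
    (hK : IsKoenigsMap h Ω) {lam : ℂ} (hlam : lam ≠ 0) :
    dirichletIntegral (fun z => exp (lam * h z)) < ⊤ ↔ ∫⁻ w in Ω, ‖exp (lam * w)‖ₑ ^ 2 < ⊤ := by
  simp [hK.dirichletIntegral_exp_mul, lt_top_iff_ne_top, ENNReal.mul_eq_top, hlam]

lemma Complex.enorm_exp_sq (z : ℂ) : ‖exp z‖ₑ ^ 2 = ENNReal.ofReal (Real.exp (2 * z.re)) := by
  rw [← ofReal_norm, norm_exp, ← ENNReal.ofReal_pow (Real.exp_nonneg _), ← Real.exp_nat_mul]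
  norm_num

lemma Complex.volume_reProdIm (s t : Set ℝ) : volume (s ×ℂ t) = volume s * volume t := by
  rw [← preimage_equivRealProd_prod]
  change volume (measurableEquivRealProd ⁻¹' (s ×ˢ t)) = _
  rw [volume_preserving_equiv_real_prod.measure_preimage_equiv, Measure.volume_eq_prod,
    Measure.prod_prod]

lemma Complex.setLIntegral_reProdIm_mul (s t : Set ℝ) {F G : ℝ → ℝ≥0∞} (hF : Measurable F)
    (hG : Measurable G) :
    ∫⁻ w in s ×ℂ t, F w.re * G w.im = (∫⁻ x in s, F x) * ∫⁻ y in t, G y := by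
  rw [← preimage_equivRealProd_prod]
  change ∫⁻ w in measurableEquivRealProd ⁻¹' (s ×ˢ t), F (measurableEquivRealProd w).1 *
    G (measurableEquivRealProd w).2 = _
  rw [volume_preserving_equiv_real_prod.setLIntegral_comp_preimage_emb
      measurableEquivRealProd.measurableEmbedding (fun p => F p.1 * G p.2),
    Measure.volume_eq_prod, ← Measure.prod_restrict,
    lintegral_prod_mul hF.aemeasurable hG.aemeasurable]

lemma setLIntegral_image_add_left {G : Type*} [MeasurableSpace G] [AddGroup G] [MeasurableAdd G]
    (μ : Measure G) [μ.IsAddLeftInvariant] (q : G) (s : Set G) (f : G → ℝ≥0∞) :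
    ∫⁻ w in (fun w => q + w) '' s, f w ∂μ = ∫⁻ v in s, f (q + v) ∂μ :=
  ((measurePreserving_add_left μ q).setLIntegral_comp_emb
    (measurableEmbedding_addLeft q) f s).symm

lemma mem_sector_zero_pi_of_im_pos {w : ℂ} (hw : 0 < w.im) : w ∈ sector 0 π := by
  refine ⟨fun h => by simp [h] at hw, (arg_nonneg_iff.2 hw.le).lt_of_ne fun h => ?_,
    arg_lt_pi_iff.2 (Or.inr hw.ne')⟩
  exact hw.ne' (arg_eq_zero_iff.1 h.symm).2

lemma sector_subset_reProdIm_Ioi {θ : ℝ} (hθ : θ ≤ π / 2) : sector 0 θ ⊆ Ioi 0 ×ℂ Ioi 0 := by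
  rintro v ⟨hv, hpos, hlt⟩
  have hre : 0 < v.re := (abs_arg_lt_pi_div_two_iff.1
    (abs_lt.2 ⟨by linarith [Real.pi_pos], hlt.trans_le hθ⟩)).resolve_right hv
  have him : 0 < v.im := by
    rw [← norm_mul_sin_arg]
    exact mul_pos (norm_pos_iff.2 hv) (Real.sin_pos_of_pos_of_lt_pi hpos (by linarith))
  exact ⟨hre, him⟩

lemma im_lt_tan_mul_re_of_mem_sector {θ : ℝ} (hθ : θ < π / 2) {v : ℂ} (hv : v ∈ sector 0 θ) :
    v.im < Real.tan θ * v.re := by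
  have hre : 0 < v.re := (sector_subset_reProdIm_Ioi hθ.le hv).1
  have htan : Real.tan (arg v) < Real.tan θ :=
    Real.tan_lt_tan_of_nonneg_of_lt_pi_div_two hv.2.1.le hθ hv.2.2
  rwa [tan_arg, div_lt_iff₀ hre] at htan

lemma two_mul_re_mul_le_of_mem_sector {lam v : ℂ} {θ : ℝ} (hθ : θ < π / 2)
    (htan_le_one : Real.tan θ ≤ 1) (htan : 2 * |lam.im| * Real.tan θ ≤ -lam.re)
    (hv : v ∈ sector 0 θ) :
    2 * (lam * v).re ≤ lam.re / 2 * v.re + lam.re / 2 * v.im := by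
  obtain ⟨hre, him⟩ : 0 < v.re ∧ 0 < v.im := sector_subset_reProdIm_Ioi hθ.le hv
  have hv_tan := im_lt_tan_mul_re_of_mem_sector hθ hv
  have hlam_re : lam.re ≤ 0 := by nlinarith [abs_nonneg lam.im]
  have him_le_re : v.im ≤ v.re := by nlinarith
  have hb : -(lam.im * v.im) ≤ |lam.im| * (Real.tan θ * v.re) := calc
    -(lam.im * v.im) = -lam.im * v.im := by ring
    _ ≤ |lam.im| * v.im := mul_le_mul_of_nonneg_right (neg_le_abs _) him.le
    _ ≤ |lam.im| * (Real.tan θ * v.re) := mul_le_mul_of_nonneg_left hv_tan.le (abs_nonneg _)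
  have htan_re : 2 * |lam.im| * Real.tan θ * v.re ≤ -lam.re * v.re :=
    mul_le_mul_of_nonneg_right htan hre.le
  have hhalf : lam.re / 2 * (v.re - v.im) ≤ 0 :=
    mul_nonpos_of_nonpos_of_nonneg (by linarith) (by linarith)
  rw [mul_re]
  linarith

theorem lintegral_sector_enorm_exp_mul_sq_lt_top {lam : ℂ} (hre : lam.re < 0) {θ : ℝ}
    (hθ : θ < π / 2) (htan_le_one : Real.tan θ ≤ 1) (htan : 2 * |lam.im| * Real.tan θ ≤ -lam.re) :
    ∫⁻ v in sector 0 θ, ‖exp (lam * v)‖ₑ ^ 2 < ⊤ := by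
  set F : ℝ → ℝ≥0∞ := fun x => ENNReal.ofReal (Real.exp (lam.re / 2 * x))
  have hF : Measurable F := by fun_prop
  have hF_lt_top : ∫⁻ x in Ioi 0, F x < ⊤ :=
    (integrableOn_exp_mul_Ioi (by linarith) 0).lintegral_lt_top
  calc ∫⁻ v in sector 0 θ, ‖exp (lam * v)‖ₑ ^ 2
      ≤ ∫⁻ v in sector 0 θ, F v.re * F v.im := by
        refine setLIntegral_mono (by fun_prop) fun v hv => ?_
        rw [enorm_exp_sq, ← ENNReal.ofReal_mul (Real.exp_nonneg _), ← Real.exp_add]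
        exact ENNReal.ofReal_le_ofReal
          (Real.exp_le_exp.2 (two_mul_re_mul_le_of_mem_sector hθ htan_le_one htan hv))
    _ ≤ ∫⁻ v in Ioi 0 ×ℂ Ioi 0, F v.re * F v.im :=
        lintegral_mono_set (sector_subset_reProdIm_Ioi hθ.le)
    _ = (∫⁻ x in Ioi 0, F x) * ∫⁻ y in Ioi 0, F y := setLIntegral_reProdIm_mul _ _ hF hF
    _ < ⊤ := ENNReal.mul_lt_top hF_lt_top hF_lt_top

theorem lintegral_enorm_exp_mul_sq_lt_top_of_subset_sector {Ω : Set ℂ} {lam : ℂ}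
    (hre : lam.re < 0) {θ : ℝ} (hθ : θ < π / 2) (htan_le_one : Real.tan θ ≤ 1)
    (htan : 2 * |lam.im| * Real.tan θ ≤ -lam.re) {q : ℂ}
    (hΩ : Ω ⊆ (fun w => q + w) '' sector 0 θ) :
    ∫⁻ w in Ω, ‖exp (lam * w)‖ₑ ^ 2 < ⊤ := calc
  ∫⁻ w in Ω, ‖exp (lam * w)‖ₑ ^ 2
      ≤ ∫⁻ w in (fun w => q + w) '' sector 0 θ, ‖exp (lam * w)‖ₑ ^ 2 := lintegral_mono_set hΩ
  _ = ‖exp (lam * q)‖ₑ ^ 2 * ∫⁻ v in sector 0 θ, ‖exp (lam * v)‖ₑ ^ 2 := by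
      simp only [setLIntegral_image_add_left, mul_add, exp_add, enorm_mul, mul_pow]
      exact lintegral_const_mul' _ _ (by simp)
  _ < ⊤ := ENNReal.mul_lt_top (by simp)
      (lintegral_sector_enorm_exp_mul_sq_lt_top hre hθ htan_le_one htan)

lemma exists_subset_translate_sector_of_outerArg_eq_zero {Ω : Set ℂ}
    (hupper : Ω ⊆ {w : ℂ | 0 < w.im}) (hΘ : outerArg Ω = 0) {ε : ℝ} (hε : 0 < ε) :
    ∃ θ, 0 < θ ∧ θ < ε ∧ ∃ q : ℂ, Ω ⊆ (fun w => q + w) '' sector 0 θ := by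
  have hπ : π ∈ {θ : ℝ | θ ∈ Ioc 0 π ∧ ∃ q : ℂ, Ω ⊆ (fun w => q + w) '' sector 0 θ} :=
    ⟨⟨Real.pi_pos, le_rfl⟩, 0, fun w hw => ⟨w, mem_sector_zero_pi_of_im_pos (hupper hw), zero_add w⟩⟩
  obtain ⟨θ, ⟨⟨hθ_pos, -⟩, hΩθ⟩, hθε⟩ :=
    (csInf_lt_iff ⟨0, fun θ hθ => hθ.1.1.le⟩ ⟨π, hπ⟩).1 (hΘ.trans_lt hε)
  exact ⟨θ, hθ_pos, hθε, hΩθ⟩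

theorem lintegral_enorm_exp_mul_sq_lt_top_of_outerArg_eq_zero {Ω : Set ℂ}
    (hupper : Ω ⊆ {w : ℂ | 0 < w.im}) (hΘ : outerArg Ω = 0) {lam : ℂ} (hre : lam.re < 0) :
    ∫⁻ w in Ω, ‖exp (lam * w)‖ₑ ^ 2 < ⊤ := by
  set t : ℝ := min 1 (-lam.re / (2 * (|lam.im| + 1)))
  have ht_pos : 0 < t := lt_min one_pos (div_pos (by linarith) (by positivity))
  obtain ⟨θ, hθ_pos, hθt, q, hΩ⟩ :=
    exists_subset_translate_sector_of_outerArg_eq_zero hupper hΘ (Real.arctan_pos.2 ht_pos)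
  have htan : Real.tan θ < t := by
    simpa only [Real.tan_arctan] using Real.tan_lt_tan_of_nonneg_of_lt_pi_div_two hθ_pos.le
      (Real.arctan_lt_pi_div_two t) hθt
  have hθ : θ < π / 2 := hθt.trans (Real.arctan_lt_pi_div_two t)
  refine lintegral_enorm_exp_mul_sq_lt_top_of_subset_sector hre hθ
    (htan.le.trans (min_le_left _ _)) ?_ hΩ
  calc 2 * |lam.im| * Real.tan θ ≤ 2 * (|lam.im| + 1) * t := by
        gcongr
        · exact (Real.tan_pos_of_pos_of_lt_pi_div_two hθ_pos hθ).le
        · linarith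
    _ ≤ 2 * (|lam.im| + 1) * (-lam.re / (2 * (|lam.im| + 1))) := by gcongr; exact min_le_right _ _
    _ = -lam.re := by field_simp

lemma ConvexPosDir.exists_reProdIm_Ici_ball_subset {Ω : Set ℂ} (hconv : ConvexPosDir Ω)
    (hopen : IsOpen Ω) {w₀ : ℂ} (hw₀ : w₀ ∈ Ω) :
    ∃ δ > 0, Ici w₀.re ×ℂ ball w₀.im δ ⊆ Ω := by
  obtain ⟨δ, hδ, hball⟩ := Metric.isOpen_iff.1 hopen w₀ hw₀
  refine ⟨δ, hδ, fun z hz => ?_⟩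
  obtain ⟨hz_re, hz_im⟩ := mem_reProdIm.1 hz
  have hp : (⟨w₀.re, z.im⟩ : ℂ) ∈ ball w₀ δ := by
    rwa [mem_ball, dist_of_re_eq (z := ⟨w₀.re, z.im⟩) (w := w₀) rfl]
  convert hconv (z.re - w₀.re) (sub_nonneg.2 hz_re) _ (hball hp) using 1
  apply Complex.ext <;> simp

theorem ConvexPosDir.lintegral_enorm_exp_mul_sq_eq_top {Ω : Set ℂ} (hconv : ConvexPosDir Ω)
    (hopen : IsOpen Ω) (hne : Ω.Nonempty) {lam : ℂ} (hre : 0 ≤ lam.re) :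
    ∫⁻ w in Ω, ‖exp (lam * w)‖ₑ ^ 2 = ⊤ := by
  obtain ⟨w₀, hw₀⟩ := hne
  obtain ⟨δ, hδ, hstrip⟩ := hconv.exists_reProdIm_Ici_ball_subset hopen hw₀
  set r : ℝ := lam.re * w₀.re - |lam.im| * (|w₀.im| + δ)
  have hlow : ∀ z ∈ Ici w₀.re ×ℂ ball w₀.im δ, ENNReal.ofReal (Real.exp (2 * r)) ≤
      ‖exp (lam * z)‖ₑ ^ 2 := by
    intro z hz
    obtain ⟨hz_re, hz_im⟩ := mem_reProdIm.1 hz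
    rw [enorm_exp_sq]
    refine ENNReal.ofReal_le_ofReal (Real.exp_le_exp.2 ?_)
    have him : |z.im| ≤ |w₀.im| + δ := by
      have := abs_sub_abs_le_abs_sub z.im w₀.im
      rw [mem_ball, Real.dist_eq] at hz_im
      linarith
    have hre_mul : lam.re * w₀.re ≤ lam.re * z.re := mul_le_mul_of_nonneg_left hz_re hre
    have him_mul : lam.im * z.im ≤ |lam.im| * (|w₀.im| + δ) :=
      (le_abs_self _).trans ((abs_mul _ _).trans_le
        (mul_le_mul_of_nonneg_left him (abs_nonneg _)))
    rw [mul_re]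
    linarith
  have hvol : volume (Ici w₀.re ×ℂ ball w₀.im δ) = ⊤ := by
    simp [volume_reProdIm, Real.volume_Ici, hδ]
  refine top_le_iff.1 ?_
  calc (⊤ : ℝ≥0∞) = ∫⁻ _ in Ici w₀.re ×ℂ ball w₀.im δ, ENNReal.ofReal (Real.exp (2 * r)) := by
        rw [setLIntegral_const, hvol, ENNReal.mul_top (by positivity)]
    _ ≤ ∫⁻ z in Ici w₀.re ×ℂ ball w₀.im δ, ‖exp (lam * z)‖ₑ ^ 2 :=
        setLIntegral_mono (by fun_prop) hlow
    _ ≤ ∫⁻ w in Ω, ‖exp (lam * w)‖ₑ ^ 2 := lintegral_mono_set hstrip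

theorem dirichlet_spectrum_phs_outerArg_zero_general
    (Ω : Set ℂ) (hopen : IsOpen Ω)
    (hupper : Ω ⊆ {w : ℂ | 0 < w.im})
    (hconv : ConvexPosDir Ω)
    (h : ℂ → ℂ) (hKoenigs : IsKoenigsMap h Ω)
    (hΘ : outerArg Ω = 0)
    (lam : ℂ) (hlam : lam ≠ 0) :
    dirichletIntegral (fun z => Complex.exp (lam * h z)) < ⊤ ↔ lam.re < 0 := by
  rw [hKoenigs.dirichletIntegral_exp_mul_lt_top_iff hlam]
  refine ⟨fun hfin => ?_, lintegral_enorm_exp_mul_sq_lt_top_of_outerArg_eq_zero hupper hΘ⟩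
  by_contra hre
  have hne : Ω.Nonempty := hKoenigs.2.2 ▸ (nonempty_ball.2 one_pos).image h
  exact hfin.ne (hconv.lintegral_enorm_exp_mul_sq_eq_top hopen hne (not_lt.1 hre))

/-- **Theorem 1.3(a).** For a parabolic semigroup of positive hyperbolic step with Koenigs domain
`Ω` in the upper half-plane, if `Θ_Ω = 0` then the point spectrum on the Dirichlet space is the
open left half-plane together with `{0}`. -/
theorem dirichlet_spectrum_phs_outerArg_zero
    (Ω : Set ℂ) (hopen : IsOpen Ω) (hsc : SimplyConnectedSpace ↥Ω)
    (hupper : Ω ⊆ {w : ℂ | 0 < w.im})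
    (hconv : ConvexPosDir Ω)
    (hnostrip : ∀ a b : ℝ, ¬ Ω ⊆ {w : ℂ | a < w.im ∧ w.im < b})
    (h : ℂ → ℂ) (hKoenigs : IsKoenigsMap h Ω)
    (hΘ : outerArg Ω = 0)
    (lam : ℂ) (hlam : lam ≠ 0) :
    dirichletIntegral (fun z => Complex.exp (lam * h z)) < ⊤ ↔ lam.re < 0 :=
  dirichlet_spectrum_phs_outerArg_zero_general Ω hopen hupper hconv h hKoenigs hΘ lam hlam
end
end

section
/- Let Ω ⊆ ℂ∖(-∞,0] be a simply connected domain, convex in the positive direction and not contained in any horizontal half-plane, and let h be a Koenigs map onto Ω. If θ_Ω = θ_Ω⁻ + θ_Ω⁺ ∈ (π, 2π], then for every λ ∈ ℂ with λ ≠ 0 one has D(e^{λh}) = ∞; that is, the point spectrum on the Dirichlet space equals {0}. (Theorem 1.4(d).) -/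
/-!
By conformal invariance of the Dirichlet integral, `D(e^{λh}) = ∫_Ω |λ|² e^{2 Re(λw)} dA(w)`.
Since `θ_Ω⁻ + θ_Ω⁺ > π`, the domain contains translates `q₁ + S(-θa, 0)` and `q₂ + S(0, θb)` with
`θa + θb > π`; directions in these two sectors, together with the positive axis, fill an arc longer
than `π`, so one of the sectors contains a direction `u` with `Re(λu) > 0`. The directions of that
sector with this property form an open cone, which has infinite area, and on its translate inside
`Ω` the integrand is bounded below by a positive constant.
-/

open MeasureTheory Set Complex Metric
open scoped ENNReal NNReal

noncomputable section

/-- The lower inner argument `θ_Ω⁻`, for a domain in the slit plane. -/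
def lowerInnerArg (Ω : Set ℂ) : ℝ :=
  sSup ({0} ∪ {θ : ℝ | θ ∈ Ioc 0 Real.pi ∧
    ∃ q : ℂ, (fun w => q + w) '' sector (-θ) 0 ⊆ Ω ∩ sector (-Real.pi) 0})

/-- The lower outer argument `Θ_Ω⁻`, for a domain in the slit plane. -/
def lowerOuterArg (Ω : Set ℂ) : ℝ :=
  sInf {θ : ℝ | θ ∈ Ioc 0 Real.pi ∧
    ∃ q : ℂ, Ω ∩ sector (-Real.pi) 0 ⊆ (fun w => q + w) '' sector (-θ) 0}

/-- The upper inner argument `θ_Ω⁺`, for a domain in the slit plane. -/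
def upperInnerArg (Ω : Set ℂ) : ℝ :=
  sSup ({0} ∪ {θ : ℝ | θ ∈ Ioc 0 Real.pi ∧
    ∃ q : ℂ, (fun w => q + w) '' sector 0 θ ⊆ Ω ∩ sector 0 Real.pi})

/-- The upper outer argument `Θ_Ω⁺`, for a domain in the slit plane. -/
def upperOuterArg (Ω : Set ℂ) : ℝ :=
  sInf {θ : ℝ | θ ∈ Ioc 0 Real.pi ∧
    ∃ q : ℂ, Ω ∩ sector 0 Real.pi ⊆ (fun w => q + w) '' sector 0 θ}

open scoped Real Pointwise

theorem MeasureTheory.Measure.addHaar_eq_top_of_smul_subset {E : Type*} [NormedAddCommGroup E]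
    [NormedSpace ℝ E] [MeasurableSpace E] [BorelSpace E] [FiniteDimensional ℝ E] [Nontrivial E]
    (μ : Measure E) [μ.IsAddHaarMeasure] {C : Set E} {r : ℝ} (hr : 1 < r) (hrC : r • C ⊆ C)
    (hC : μ C ≠ 0) : μ C = ⊤ := by
  by_contra htop
  have hle : ENNReal.ofReal |r ^ Module.finrank ℝ E| * μ C ≤ 1 * μ C := by
    rw [one_mul, ← Measure.addHaar_smul]
    exact measure_mono hrC
  have hpow := ENNReal.ofReal_le_one.1 ((ENNReal.mul_le_mul_iff_left hC htop).1 hle)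
  have := one_lt_pow₀ hr (Module.finrank_pos (R := ℝ) (M := E)).ne'
  rw [abs_of_pos (by linarith)] at hpow
  linarith

theorem lintegral_nnnorm_deriv_comp_sq {U : Set ℂ} (hU : IsOpen U) {h F : ℂ → ℂ}
    (hh : DifferentiableOn ℂ h U) (hinj : InjOn h U) (hF : Differentiable ℂ F) :
    ∫⁻ z in U, (‖deriv (F ∘ h) z‖₊ : ℝ≥0∞) ^ 2 = ∫⁻ w in h '' U, (‖deriv F w‖₊ : ℝ≥0∞) ^ 2 := by
  have hd : ∀ z ∈ U, HasDerivAt h (deriv h z) z :=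
    fun z hz => (hh.differentiableAt (hU.mem_nhds hz)).hasDerivAt
  rw [lintegral_image_eq_lintegral_abs_det_fderiv_mul volume hU.measurableSet
    (fun z hz => ((hd z hz).hasFDerivAt.restrictScalars ℝ).hasFDerivWithinAt) hinj]
  refine setLIntegral_congr_fun hU.measurableSet fun z hz => ?_
  simp only [((hF (h z)).hasDerivAt.comp z (hd z hz)).deriv, ContinuousLinearMap.det,
    ContinuousLinearMap.coe_restrictScalars, LinearMap.det_restrictScalars,
    Algebra.norm_complex_apply]
  simp [Complex.normSq_eq_norm_sq, ENNReal.ofReal_pow, mul_pow, mul_comm, enorm_eq_nnnorm]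

theorem isOpen_sector {a b : ℝ} (hb : b ≤ π) : IsOpen (sector a b) := by
  have : sector a b = slitPlane ∩ arg ⁻¹' Ioo a b := by
    ext w
    refine ⟨fun ⟨hw, ha, hb'⟩ => ⟨mem_slitPlane_iff_arg.2 ⟨by linarith, hw⟩, ha, hb'⟩,
      fun ⟨hw, hab⟩ => ⟨slitPlane_ne_zero hw, hab⟩⟩
  rw [this]
  exact continuousOn_arg.isOpen_inter_preimage isOpen_slitPlane isOpen_Ioo

theorem ofReal_mul_mem_sector {a b t : ℝ} {u : ℂ} (ht : 0 < t) (hu : u ∈ sector a b) :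
    (t : ℂ) * u ∈ sector a b := by
  obtain ⟨hu0, hu⟩ := hu
  exact ⟨mul_ne_zero (ofReal_ne_zero.2 ht.ne') hu0, by rwa [arg_real_mul _ ht]⟩

theorem exp_mul_I_mem_sector {a b ψ : ℝ} (ha : -π ≤ a) (hb : b ≤ π) (hψ : ψ ∈ Ioo a b) :
    exp (ψ * I) ∈ sector a b := by
  refine ⟨exp_ne_zero _, ?_⟩
  rwa [arg_exp_mul_I, (toIocMod_eq_self _).2 ⟨by linarith [hψ.1], by linarith [hψ.2]⟩]

theorem re_mul_exp_mul_I (lam : ℂ) (ψ : ℝ) :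
    (lam * exp (ψ * I)).re = ‖lam‖ * Real.cos (arg lam + ψ) := by
  conv_lhs => rw [← norm_mul_exp_arg_mul_I lam]
  rw [mul_assoc, ← exp_add, ← add_mul, ← ofReal_add, re_ofReal_mul, exp_ofReal_mul_I_re]

theorem exists_cos_add_pos_of_nonneg {φ θa θb : ℝ} (hφ : φ ∈ Icc 0 π) (ha : 0 < θa)
    (hab : π < θa + θb) :
    ∃ ψ, (ψ ∈ Ioo (-θa) 0 ∨ ψ ∈ Ioo 0 θb) ∧ 0 < Real.cos (φ + ψ) := by
  obtain ⟨hφ0, hφπ⟩ := hφ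
  have hπ := Real.pi_pos
  rcases lt_or_ge φ (π / 2 + θa) with hφa | hφa
  · obtain ⟨ψ, hψ, hψ'⟩ : (Ioo (-θa) 0 ∩ Ioo (-(π / 2) - φ) (π / 2 - φ)).Nonempty := by
      simp only [Ioo_inter_Ioo, nonempty_Ioo, sup_lt_iff, lt_inf_iff]
      refine ⟨⟨?_, ?_⟩, ?_, ?_⟩ <;> linarith
    exact ⟨ψ, Or.inl hψ, Real.cos_pos_of_mem_Ioo ⟨by linarith [hψ'.1], by linarith [hψ'.2]⟩⟩
  · obtain ⟨ψ, hψ, hψ'⟩ : (Ioo 0 θb ∩ Ioo (3 * π / 2 - φ) (5 * π / 2 - φ)).Nonempty := by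
      simp only [Ioo_inter_Ioo, nonempty_Ioo, sup_lt_iff, lt_inf_iff]
      refine ⟨⟨?_, ?_⟩, ?_, ?_⟩ <;> linarith
    refine ⟨ψ, Or.inr hψ, ?_⟩
    rw [← Real.cos_sub_two_pi]
    exact Real.cos_pos_of_mem_Ioo ⟨by linarith [hψ'.1], by linarith [hψ'.2]⟩

theorem exists_cos_add_pos {φ θa θb : ℝ} (hφ : φ ∈ Icc (-π) π) (ha : 0 < θa) (hb : 0 < θb)
    (hab : π < θa + θb) : ∃ ψ, (ψ ∈ Ioo (-θa) 0 ∨ ψ ∈ Ioo 0 θb) ∧ 0 < Real.cos (φ + ψ) := by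
  rcases le_total 0 φ with hφ0 | hφ0
  · exact exists_cos_add_pos_of_nonneg ⟨hφ0, hφ.2⟩ ha hab
  -- reflect `φ ↦ -φ`, which exchanges the roles of the two sectors
  obtain ⟨ψ, hψ, hcos⟩ := exists_cos_add_pos_of_nonneg (θb := θa)
    ⟨neg_nonneg.2 hφ0, by linarith [hφ.1]⟩ hb (by linarith)
  refine ⟨-ψ, hψ.symm.imp (fun h => ⟨by linarith [h.2], by linarith [h.1]⟩)
    (fun h => ⟨by linarith [h.2], by linarith [h.1]⟩), ?_⟩
  rwa [← Real.cos_neg, neg_add, neg_neg]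

theorem exists_mem_sector_re_mul_pos {lam : ℂ} (hlam : lam ≠ 0) {θa θb : ℝ}
    (ha : θa ∈ Ioc 0 π) (hb : θb ∈ Ioc 0 π) (hab : π < θa + θb) :
    ∃ u, (u ∈ sector (-θa) 0 ∨ u ∈ sector 0 θb) ∧ 0 < (lam * u).re := by
  obtain ⟨ψ, hψ, hcos⟩ :=
    exists_cos_add_pos (Ioc_subset_Icc_self (arg_mem_Ioc lam)) ha.1 hb.1 hab
  refine ⟨exp (ψ * I), hψ.imp (exp_mul_I_mem_sector (by linarith [ha.2]) Real.pi_pos.le)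
    (exp_mul_I_mem_sector (by linarith [Real.pi_pos]) hb.2), ?_⟩
  rw [re_mul_exp_mul_I]
  exact mul_pos (norm_pos_iff.2 hlam) hcos

theorem lintegral_nnnorm_deriv_cexp_mul_sq_eq_top {Ω s : Set ℂ} {lam : ℂ} {c : ℝ}
    (hlam : lam ≠ 0) (hs : MeasurableSet s) (hsΩ : s ⊆ Ω) (hvol : volume s = ⊤)
    (hre : ∀ w ∈ s, c ≤ (lam * w).re) :
    ∫⁻ w in Ω, (‖deriv (fun w => exp (lam * w)) w‖₊ : ℝ≥0∞) ^ 2 = ⊤ := by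
  set κ : ℝ≥0∞ := ENNReal.ofReal (‖lam‖ * Real.exp c) ^ 2
  have hκ : κ ≠ 0 := pow_ne_zero _ (ENNReal.ofReal_pos.2 (by positivity)).ne'
  have hbound : ∀ w ∈ s, κ ≤ (‖deriv (fun w => exp (lam * w)) w‖₊ : ℝ≥0∞) ^ 2 := by
    intro w hw
    have hderiv : deriv (fun w => exp (lam * w)) w = exp (lam * w) * lam := by
      simpa using ((hasDerivAt_id w).const_mul lam).cexp.deriv
    rw [← enorm_eq_nnnorm, ← ofReal_norm, hderiv, norm_mul, norm_exp, mul_comm]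
    have := hre w hw
    show ENNReal.ofReal (‖lam‖ * Real.exp c) ^ 2 ≤ _
    gcongr
  refine top_unique ?_
  calc ⊤ = κ * volume s := by rw [hvol, ENNReal.mul_top hκ]
    _ = ∫⁻ _ in s, κ := (setLIntegral_const s κ).symm
    _ ≤ ∫⁻ w in s, (‖deriv (fun w => exp (lam * w)) w‖₊ : ℝ≥0∞) ^ 2 :=
      setLIntegral_mono' hs hbound
    _ ≤ _ := lintegral_mono_set hsΩ

theorem lintegral_nnnorm_deriv_cexp_mul_sq_eq_top_of_sector_subset {Ω : Set ℂ} {lam q u : ℂ}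
    {a b : ℝ} (hb : b ≤ π) (hΩ : (fun w => q + w) '' sector a b ⊆ Ω) (hu : u ∈ sector a b)
    (hre : 0 < (lam * u).re) :
    ∫⁻ w in Ω, (‖deriv (fun w => exp (lam * w)) w‖₊ : ℝ≥0∞) ^ 2 = ⊤ := by
  set C := sector a b ∩ {v | 0 < (lam * v).re}
  have hCopen : IsOpen C :=
    (isOpen_sector hb).inter (isOpen_lt continuous_const (by fun_prop))
  have hCvol : volume C = ⊤ := by
    refine Measure.addHaar_eq_top_of_smul_subset volume one_lt_two ?_
      (hCopen.measure_ne_zero volume ⟨u, hu, hre⟩)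
    rintro _ ⟨v, ⟨hv, hv'⟩, rfl⟩
    refine ⟨by simpa [real_smul] using ofReal_mul_mem_sector two_pos hv, ?_⟩
    simp only [mem_ofPred_eq, real_smul, mul_left_comm lam, re_ofReal_mul] at hv' ⊢
    positivity
  refine lintegral_nnnorm_deriv_cexp_mul_sq_eq_top (s := (fun w => q + w) '' C) (c := (lam * q).re)
    ?_ ?_ ((image_mono inter_subset_left).trans hΩ) ?_ ?_
  · rintro rfl
    simp at hre
  · rw [image_add_left]
    exact measurable_const_add _ hCopen.measurableSet
  · rw [image_add_left, measure_preimage_add, hCvol]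
  · rintro _ ⟨v, ⟨-, hv⟩, rfl⟩
    simp only [mem_ofPred_eq] at hv
    simp only [mul_add, add_re]
    linarith

theorem csSup_zero_union_le {A : Set ℝ} {c : ℝ} (hc : 0 ≤ c) (hA : ∀ θ ∈ A, θ ≤ c) :
    sSup ({0} ∪ A) ≤ c :=
  csSup_le (by simp) fun θ hθ => hθ.elim (fun h => h ▸ hc) (hA θ)

theorem exists_mem_lt_of_lt_csSup_zero_union {A : Set ℝ} {x : ℝ} (hx : 0 ≤ x)
    (h : x < sSup ({0} ∪ A)) : ∃ θ ∈ A, x < θ := by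
  obtain ⟨θ, hθ | hθ, hxθ⟩ := exists_lt_of_lt_csSup (by simp) h
  · exact absurd (hθ ▸ hxθ) hx.not_gt
  · exact ⟨θ, hθ, hxθ⟩

theorem lowerInnerArg_le_pi (Ω : Set ℂ) : lowerInnerArg Ω ≤ π :=
  csSup_zero_union_le Real.pi_pos.le fun _ hθ => hθ.1.2

theorem upperInnerArg_le_pi (Ω : Set ℂ) : upperInnerArg Ω ≤ π :=
  csSup_zero_union_le Real.pi_pos.le fun _ hθ => hθ.1.2

theorem exists_sectors_subset_of_pi_lt_innerArg {Ω : Set ℂ}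
    (h : π < lowerInnerArg Ω + upperInnerArg Ω) :
    ∃ θa θb : ℝ, π < θa + θb ∧
      (θa ∈ Ioc 0 π ∧ ∃ q : ℂ, (fun w => q + w) '' sector (-θa) 0 ⊆ Ω) ∧
      (θb ∈ Ioc 0 π ∧ ∃ q : ℂ, (fun w => q + w) '' sector 0 θb ⊆ Ω) := by
  have hL := lowerInnerArg_le_pi Ω
  have hU := upperInnerArg_le_pi Ω
  obtain ⟨θa, ⟨hθa, qa, hqa⟩, hlt_a⟩ :=
    exists_mem_lt_of_lt_csSup_zero_union (x := (lowerInnerArg Ω - upperInnerArg Ω + π) / 2)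
      (by linarith) (show _ < lowerInnerArg Ω by linarith)
  obtain ⟨θb, ⟨hθb, qb, hqb⟩, hlt_b⟩ :=
    exists_mem_lt_of_lt_csSup_zero_union (x := (upperInnerArg Ω - lowerInnerArg Ω + π) / 2)
      (by linarith) (show _ < upperInnerArg Ω by linarith)
  exact ⟨θa, θb, by linarith, ⟨hθa, qa, hqa.trans inter_subset_left⟩,
    ⟨hθb, qb, hqb.trans inter_subset_left⟩⟩

theorem dirichlet_spectrum_zhs_large_innerArg_general
    (Ω : Set ℂ)
    (h : ℂ → ℂ) (hKoenigs : IsKoenigsMap h Ω)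
    (hsum_gt : Real.pi < lowerInnerArg Ω + upperInnerArg Ω)
    (lam : ℂ) (hlam : lam ≠ 0) :
    dirichletIntegral (fun z => Complex.exp (lam * h z)) = ⊤ := by
  obtain ⟨hdiff, hinj, rfl⟩ := hKoenigs
  obtain ⟨θa, θb, hsum, ⟨hθa, qa, hqa⟩, hθb, qb, hqb⟩ :=
    exists_sectors_subset_of_pi_lt_innerArg hsum_gt
  refine (lintegral_nnnorm_deriv_comp_sq isOpen_ball hdiff hinj
    (F := fun w => exp (lam * w)) (by fun_prop)).trans ?_
  obtain ⟨u, hu | hu, hre⟩ := exists_mem_sector_re_mul_pos hlam hθa hθb hsum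
  · exact lintegral_nnnorm_deriv_cexp_mul_sq_eq_top_of_sector_subset Real.pi_pos.le hqa hu hre
  · exact lintegral_nnnorm_deriv_cexp_mul_sq_eq_top_of_sector_subset hθb.2 hqb hu hre

/-- **Theorem 1.4(d).** For a parabolic semigroup of zero hyperbolic step with Koenigs domain
`Ω ⊆ ℂ∖(-∞,0]`, if `θ_Ω = θ_Ω⁻ + θ_Ω⁺ ∈ (π, 2π]` then the point spectrum on the Dirichlet
space is `{0}`: `D(e^{λh}) = ∞` for every nonzero `λ`. -/
theorem dirichlet_spectrum_zhs_large_innerArg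
    (Ω : Set ℂ) (hopen : IsOpen Ω) (hsc : SimplyConnectedSpace ↥Ω)
    (hslit : Ω ⊆ {w : ℂ | 0 < w.re ∨ w.im ≠ 0})
    (hconv : ConvexPosDir Ω)
    (hnohalf : ∀ c : ℝ, ¬ Ω ⊆ {w : ℂ | w.im < c} ∧ ¬ Ω ⊆ {w : ℂ | c < w.im})
    (h : ℂ → ℂ) (hKoenigs : IsKoenigsMap h Ω)
    (hsum_gt : Real.pi < lowerInnerArg Ω + upperInnerArg Ω)
    (hsum_le : lowerInnerArg Ω + upperInnerArg Ω ≤ 2 * Real.pi)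
    (lam : ℂ) (hlam : lam ≠ 0) :
    dirichletIntegral (fun z => Complex.exp (lam * h z)) = ⊤ :=
  dirichlet_spectrum_zhs_large_innerArg_general Ω h hKoenigs hsum_gt lam hlam
end
end
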